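/- Let $H, K$ be Hilbert spaces, $F: D \subset H \to K$ with derivative $F'$ Lipschitz with constant $L$ on the convex set $D$. Suppose $x^\dagger \in D$ satisfies $F(x^\dagger) = \mathcal{M}$ and the source condition $x^\dagger - x_0 = F'(x^\dagger)^* w$ with $L\|w\|_K < 1$. Then any minimizer $x_\alpha \in D$ of $J_\alpha(x) = \|F(x)-\mathcal{M}\|_K^2 + \alpha\|x - x_0\|_H^2$ satisfies $\|x_\alpha - x^\dagger\|_H \le C\sqrt{\alpha}$ and $\|F(x_\alpha) - \mathcal{M}\|_K \le C\alpha$ for a constant $C$ depending only on $\|w\|$ and $L$. -/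

import Mathlib

/-!
Comparing the minimizer `xα` with the competitor `x†` gives
`‖F xα - 𝓜‖² + α‖xα - x†‖² ≤ 2α⟪xα - x†, x₀ - x†⟫`. The source condition turns the inner
product into `-⟪F'(x†)(xα - x†), w⟫`, and the Taylor estimate bounds `‖F'(x†)(xα - x†)‖` by
`‖F xα - 𝓜‖ + (L/2)‖xα - x†‖²`. Since `L‖w‖ < 1`, the quadratic term is absorbed on the left,
leaving a quadratic inequality in `‖F xα - 𝓜‖` and `‖xα - x†‖` that yields both rates.
-/

open Set RealInnerProductSpace

section Taylor

variable {H K : Type*} [NormedAddCommGroup H] [NormedSpace ℝ H]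
  [NormedAddCommGroup K] [NormedSpace ℝ K]
  {D : Set H} {F : H → K} {F' : H → H →L[ℝ] K} {L : ℝ}

lemma hasDerivAt_comp_add_smul_of_gateaux
    (hdiff : ∀ x ∈ D, ∀ h : H, HasDerivAt (fun t : ℝ => F (x + t • h)) (F' x h) 0)
    {x h : H} {t : ℝ} (hxt : x + t • h ∈ D) :
    HasDerivAt (fun u : ℝ => F (x + u • h)) (F' (x + t • h) h) t := by
  have hbase : HasDerivAt (fun s : ℝ => F (x + t • h + s • h)) (F' (x + t • h) h) (t - t) := by
    rw [sub_self]
    exact hdiff _ hxt h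
  have hshift := hbase.comp_sub_const t t
  convert hshift using 3 with u
  module

lemma Convex.norm_image_sub_sub_deriv_le (hD : Convex ℝ D)
    (hLip : ∀ x₁ ∈ D, ∀ x₂ ∈ D, ‖F' x₁ - F' x₂‖ ≤ L * ‖x₁ - x₂‖)
    (hdiff : ∀ x ∈ D, ∀ h : H, HasDerivAt (fun t : ℝ => F (x + t • h)) (F' x h) 0)
    {x y : H} (hx : x ∈ D) (hy : y ∈ D) :
    ‖F y - F x - F' x (y - x)‖ ≤ L / 2 * ‖y - x‖ ^ 2 := by
  set h := y - x
  have hseg : ∀ t ∈ Icc (0 : ℝ) 1, x + t • h ∈ D := fun t ht => hD.add_smul_sub_mem hx hy ht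
  set r : ℝ → K := fun t => F (x + t • h) - F x - t • F' x h
  have hr : ∀ t ∈ Icc (0 : ℝ) 1, HasDerivAt r ((F' (x + t • h) - F' x) h) t := fun t ht =>
    ((hasDerivAt_comp_add_smul_of_gateaux hdiff (hseg t ht)).sub_const (F x)).sub
      (by simpa using (hasDerivAt_id t).smul_const (F' x h))
  have hbound : ∀ t ∈ Ico (0 : ℝ) 1, ‖(F' (x + t • h) - F' x) h‖ ≤ L * ‖h‖ ^ 2 * t := by
    intro t ht
    have hLt : ‖F' (x + t • h) - F' x‖ ≤ L * (t * ‖h‖) := by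
      simpa [norm_smul, abs_of_nonneg ht.1] using hLip _ (hseg t (Ico_subset_Icc_self ht)) _ hx
    calc ‖(F' (x + t • h) - F' x) h‖ ≤ ‖F' (x + t • h) - F' x‖ * ‖h‖ :=
          ContinuousLinearMap.le_opNorm _ _
      _ ≤ L * (t * ‖h‖) * ‖h‖ := by gcongr
      _ = L * ‖h‖ ^ 2 * t := by ring
  have hB : ∀ t : ℝ, HasDerivAt (fun t => L / 2 * ‖h‖ ^ 2 * t ^ 2) (L * ‖h‖ ^ 2 * t) t :=
    fun t => ((hasDerivAt_pow 2 t).const_mul (L / 2 * ‖h‖ ^ 2)).congr_deriv (by push_cast; ring)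
  have hr1 := image_norm_le_of_norm_deriv_right_le_deriv_boundary
    (fun t ht => (hr t ht).continuousAt.continuousWithinAt)
    (fun t ht => (hr t (Ico_subset_Icc_self ht)).hasDerivWithinAt)
    (by simp [r]) hB hbound (right_mem_Icc.2 zero_le_one)
  simpa [r, h] using hr1

end Taylor

lemma IsMinOn.tikhonov_sq_le_inner {H K : Type*} [NormedAddCommGroup H]
    [InnerProductSpace ℝ H] [NormedAddCommGroup K] {D : Set H} {G : H → K} {𝓜 : K} {α : ℝ}
    {x₀ xdag xα : H}
    (hmin : IsMinOn (fun x => ‖G x - 𝓜‖ ^ 2 + α * ‖x - x₀‖ ^ 2) D xα)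
    (hxdag : xdag ∈ D) (hsol : G xdag = 𝓜) :
    ‖G xα - 𝓜‖ ^ 2 + α * ‖xα - xdag‖ ^ 2 ≤ 2 * α * ⟪xα - xdag, x₀ - xdag⟫ := by
  have hcmp : ‖G xα - 𝓜‖ ^ 2 + α * ‖xα - x₀‖ ^ 2 ≤ α * ‖xdag - x₀‖ ^ 2 := by
    simpa [hsol] using isMinOn_iff.mp hmin xdag hxdag
  have hexpand : ‖xα - x₀‖ ^ 2
      = ‖xα - xdag‖ ^ 2 - 2 * ⟪xα - xdag, x₀ - xdag⟫ + ‖xdag - x₀‖ ^ 2 := by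
    rw [show xα - x₀ = (xα - xdag) - (x₀ - xdag) by abel, norm_sub_sq_real, norm_sub_rev x₀]
  rw [hexpand] at hcmp
  linarith

lemma tikhonov_rates_of_quadratic_le {α ρ L e d : ℝ} (hα : 0 < α) (hρ : 0 ≤ ρ)
    (hsmall : L * ρ < 1) (h : e ^ 2 + α * d ^ 2 ≤ 2 * α * ρ * (e + L / 2 * d ^ 2)) :
    d ≤ ρ / √(1 - L * ρ) * √α ∧ e ≤ 2 * ρ * α := by
  have hS : 0 < 1 - L * ρ := by linarith
  have hquad : e ^ 2 - 2 * α * ρ * e + α * (1 - L * ρ) * d ^ 2 ≤ 0 := by linarith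
  have hαSd : 0 ≤ α * (1 - L * ρ) * d ^ 2 := by positivity
  have hd2 : (1 - L * ρ) * d ^ 2 ≤ α * ρ ^ 2 := by
    -- complete the square: `(e - αρ)² + α(1 - Lρ)d² ≤ α²ρ²`
    refine le_of_mul_le_mul_left ?_ hα
    nlinarith [sq_nonneg (e - α * ρ)]
  have he2 : e ^ 2 ≤ 2 * α * ρ * e := by linarith
  constructor
  · refine le_of_pow_le_pow_left₀ two_ne_zero (by positivity) ?_
    rw [mul_pow, div_pow, Real.sq_sqrt hS.le, Real.sq_sqrt hα.le, div_mul_eq_mul_div,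
      le_div_iff₀ hS]
    linarith
  · by_contra! hlt
    nlinarith [lt_of_le_of_lt (by positivity : 0 ≤ 2 * ρ * α) hlt]

theorem tikhonov_convergence_rates_general
    {H K : Type*}
    [NormedAddCommGroup H] [InnerProductSpace ℝ H] [CompleteSpace H]
    [NormedAddCommGroup K] [InnerProductSpace ℝ K] [CompleteSpace K]
    (D : Set H) (hD : Convex ℝ D)
    (F : H → K) (F' : H → H →L[ℝ] K) (L : ℝ)
    (hLip : ∀ x₁ ∈ D, ∀ x₂ ∈ D, ‖F' x₁ - F' x₂‖ ≤ L * ‖x₁ - x₂‖)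
    (hdiff : ∀ x ∈ D, ∀ h : H, HasDerivAt (fun t : ℝ => F (x + t • h)) (F' x h) 0)
    (x₀ xdag : H) (𝓜 : K) (hxdagD : xdag ∈ D) (hsol : F xdag = 𝓜)
    (w : K)
    (hsource : xdag - x₀ = ContinuousLinearMap.adjoint (F' xdag) w)
    (hsmall : L * ‖w‖ < 1) :
    ∃ C : ℝ, 0 < C ∧
      ∀ α : ℝ, 0 < α →
        ∀ xα ∈ D,
          IsMinOn (fun x => ‖F x - 𝓜‖ ^ 2 + α * ‖x - x₀‖ ^ 2) D xα →
          ‖xα - xdag‖ ≤ C * Real.sqrt α ∧ ‖F xα - 𝓜‖ ≤ C * α := by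
  refine ⟨‖w‖ / √(1 - L * ‖w‖) + 2 * ‖w‖ + 1, by positivity, fun α hα xα hxα hmin => ?_⟩
  have htaylor := hD.norm_image_sub_sub_deriv_le hLip hdiff hxdagD hxα
  rw [hsol] at htaylor
  have hlin : ‖F' xdag (xα - xdag)‖ ≤ ‖F xα - 𝓜‖ + L / 2 * ‖xα - xdag‖ ^ 2 := by
    have := norm_sub_le (F xα - 𝓜) (F xα - 𝓜 - F' xdag (xα - xdag))
    rw [sub_sub_cancel] at this
    linarith
  have hinner : ⟪xα - xdag, x₀ - xdag⟫ ≤ ‖w‖ * (‖F xα - 𝓜‖ + L / 2 * ‖xα - xdag‖ ^ 2) :=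
    calc ⟪xα - xdag, x₀ - xdag⟫ = -⟪F' xdag (xα - xdag), w⟫ := by
          rw [← neg_sub xdag x₀, inner_neg_right, hsource,
            ContinuousLinearMap.adjoint_inner_right]
      _ ≤ ‖F' xdag (xα - xdag)‖ * ‖w‖ := (neg_le_abs _).trans (abs_real_inner_le_norm _ _)
      _ ≤ ‖w‖ * (‖F xα - 𝓜‖ + L / 2 * ‖xα - xdag‖ ^ 2) := by
          rw [mul_comm]; gcongr
  have hquad := hmin.tikhonov_sq_le_inner hxdagD hsol
  have hw := norm_nonneg w
  have hscaled := mul_le_mul_of_nonneg_left hinner (by positivity : (0 : ℝ) ≤ 2 * α)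
  obtain ⟨hd, he⟩ := tikhonov_rates_of_quadratic_le (e := ‖F xα - 𝓜‖) (d := ‖xα - xdag‖)
    hα hw hsmall (by linarith)
  constructor
  · exact hd.trans (by gcongr; linarith)
  · exact he.trans (by gcongr; linarith [div_nonneg hw (Real.sqrt_nonneg (1 - L * ‖w‖))])

/-- Convergence rates for nonlinear Tikhonov regularization
(Engl–Kunisch–Neubauer) with exact data.  Let `H, K` be real Hilbert spaces, `D ⊆ H`
convex, `F : D → K` Gateaux differentiable with derivative `F'` Lipschitz with constant
`L` on `D`.  Suppose `x† ∈ D` satisfies `F(x†) = 𝓜` and the source condition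
`x† - x₀ = F'(x†)* w` with `L‖w‖ < 1`.  Then there is a constant `C` depending only on
`‖w‖` and `L` such that every minimizer `x_α ∈ D` of
`J_α(x) = ‖F x - 𝓜‖² + α‖x - x₀‖²` over `D` satisfies `‖x_α - x†‖ ≤ C√α` and
`‖F x_α - 𝓜‖ ≤ C α`. -/
theorem tikhonov_convergence_rates
    {H K : Type*}
    [NormedAddCommGroup H] [InnerProductSpace ℝ H] [CompleteSpace H]
    [NormedAddCommGroup K] [InnerProductSpace ℝ K] [CompleteSpace K]
    (D : Set H) (hD : Convex ℝ D)
    (F : H → K) (F' : H → H →L[ℝ] K) (L : ℝ) (hL : 0 < L)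
    (hLip : ∀ x₁ ∈ D, ∀ x₂ ∈ D, ‖F' x₁ - F' x₂‖ ≤ L * ‖x₁ - x₂‖)
    (hdiff : ∀ x ∈ D, ∀ h : H, HasDerivAt (fun t : ℝ => F (x + t • h)) (F' x h) 0)
    (x₀ xdag : H) (𝓜 : K) (hxdagD : xdag ∈ D) (hsol : F xdag = 𝓜)
    (w : K)
    (hsource : xdag - x₀ = ContinuousLinearMap.adjoint (F' xdag) w)
    (hsmall : L * ‖w‖ < 1) :
    ∃ C : ℝ, 0 < C ∧
      ∀ α : ℝ, 0 < α →
        ∀ xα ∈ D,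
          IsMinOn (fun x => ‖F x - 𝓜‖ ^ 2 + α * ‖x - x₀‖ ^ 2) D xα →
          ‖xα - xdag‖ ≤ C * Real.sqrt α ∧ ‖F xα - 𝓜‖ ≤ C * α :=
  tikhonov_convergence_rates_general D hD F F' L hLip hdiff x₀ xdag 𝓜 hxdagD hsol w hsource hsmall
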